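/- arXiv:math/0205123 — 3 statements merged into one kernel-verified Lean document; each statement's English description precedes it below -/
import Mathlib

section
/- Let n ≥ 1 and let a be an integer with 0 ≤ a < n. Then the sum over all complex n-th roots of unity ζ of ζ^a · (1−z²)(1−z^n) / ((1−ζz)(1−ζ⁻¹z)), viewed as a polynomial function of z, equals n·(z^a + z^{n−a}) for all complex z. -/
open Finset

/-- The primitive `n`-th root of unity `ω = e^{2πi/n}`. -/
noncomputable def omega (n : ℕ) : ℂ := Complex.exp (2 * Real.pi * Complex.I / n)

lemma omega_prim (n : ℕ) (hn : 1 ≤ n) : IsPrimitiveRoot (omega n) n :=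
  Complex.isPrimitiveRoot_exp n (by omega)

lemma root_sum (n : ℕ) (hn : 1 ≤ n) (m : ℕ) :
    ∑ j ∈ Finset.range n, (omega n ^ m) ^ j = if n ∣ m then (n : ℂ) else 0 := by
  have hprim := omega_prim n hn
  by_cases h : n ∣ m
  · rw [if_pos h, (hprim.pow_eq_one_iff_dvd m).mpr h]
    simp
  · rw [if_neg h]
    have hne : omega n ^ m ≠ 1 := fun he => h ((hprim.pow_eq_one_iff_dvd m).mp he)
    rw [geom_sum_eq hne]
    have h1 : (omega n ^ m) ^ n = 1 := by
      rw [← pow_mul, mul_comm, pow_mul, hprim.pow_eq_one, one_pow]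
    rw [h1]
    simp

/-- Lemma 4.1 (polynomial form): for `0 ≤ a < n`, the sum over all complex `n`-th roots of
unity `ζ` of `ζ^a (1-z²)(1-z^n)/((1-ζz)(1-ζ⁻¹z))`, viewed as a polynomial function of `z`,
equals `n (z^a + z^{n-a})`.  (Stated for all `z` with `z^n ≠ 1`, i.e. away from the removable
singularities; equality of the polynomial extensions follows by continuity.) -/
theorem stmt0 (n a : ℕ) (hn : 1 ≤ n) (ha : a < n) (z : ℂ) (hz : z ^ n ≠ 1) :
    ∑ j ∈ Finset.range n,
      ((omega n) ^ j) ^ a * ((1 - z ^ 2) * (1 - z ^ n)) /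
        ((1 - (omega n) ^ j * z) * (1 - ((omega n) ^ j)⁻¹ * z))
      = (n : ℂ) * (z ^ a + z ^ (n - a)) := by
  have hprim := omega_prim n hn
  set ω := omega n with hωdef
  have hω : ω ^ n = 1 := hprim.pow_eq_one
  have hωj : ∀ j : ℕ, (ω ^ j) ^ n = 1 := fun j => by
    rw [← pow_mul, mul_comm, pow_mul, hω, one_pow]
  have hω0 : ∀ j : ℕ, ω ^ j ≠ 0 := by
    intro j h
    have h2 := hωj j
    rw [h, zero_pow (by omega)] at h2
    exact zero_ne_one h2
  have hd1 : ∀ j : ℕ, 1 - ω ^ j * z ≠ 0 := by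
    intro j h
    apply hz
    have h1 : ω ^ j * z = 1 := by linear_combination -h
    calc z ^ n = (ω ^ j) ^ n * z ^ n := by rw [hωj j, one_mul]
    _ = (ω ^ j * z) ^ n := (mul_pow _ _ _).symm
    _ = 1 := by rw [h1, one_pow]
  have hinv : ∀ j : ℕ, (ω ^ j)⁻¹ = (ω ^ j) ^ (n - 1) := by
    intro j
    refine inv_eq_of_mul_eq_one_right ?_
    rw [← pow_succ']
    have hs : n - 1 + 1 = n := by omega
    rw [hs, hωj]
  have hd2 : ∀ j : ℕ, 1 - (ω ^ j)⁻¹ * z ≠ 0 := by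
    intro j
    rw [hinv j, ← pow_mul]
    exact hd1 (j * (n - 1))
  -- Step 1: rewrite each summand using finite geometric sums
  have step1 : ∀ j ∈ Finset.range n,
      (ω ^ j) ^ a * ((1 - z ^ 2) * (1 - z ^ n)) /
          ((1 - ω ^ j * z) * (1 - (ω ^ j)⁻¹ * z))
      = -((ω ^ j) ^ a * (1 - z ^ n))
        + (ω ^ j) ^ a * (∑ k ∈ Finset.range n, (ω ^ j * z) ^ k)
        + (ω ^ j) ^ a * (∑ k ∈ Finset.range n, ((ω ^ j)⁻¹ * z) ^ k) := by
    intro j _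
    have h1 : (1 - ω ^ j * z) * (∑ k ∈ Finset.range n, (ω ^ j * z) ^ k) = 1 - z ^ n := by
      have hg := geom_sum_mul (ω ^ j * z) n
      have hp : (ω ^ j * z) ^ n = z ^ n := by rw [mul_pow, hωj, one_mul]
      linear_combination -hg - hp
    have h2 : (1 - (ω ^ j)⁻¹ * z) * (∑ k ∈ Finset.range n, ((ω ^ j)⁻¹ * z) ^ k)
        = 1 - z ^ n := by
      have hg := geom_sum_mul ((ω ^ j)⁻¹ * z) n
      have hp : ((ω ^ j)⁻¹ * z) ^ n = z ^ n := by
        rw [mul_pow, inv_pow, hωj, inv_one, one_mul]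
      linear_combination -hg - hp
    have h3 : ω ^ j * (ω ^ j)⁻¹ = 1 := mul_inv_cancel₀ (hω0 j)
    rw [div_eq_iff (mul_ne_zero (hd1 j) (hd2 j))]
    linear_combination (-(ω ^ j) ^ a * (1 - (ω ^ j)⁻¹ * z)) * h1
      + (-(ω ^ j) ^ a * (1 - ω ^ j * z)) * h2
      + (ω ^ j) ^ a * (1 - z ^ n) * z ^ 2 * h3
  rw [Finset.sum_congr rfl step1, Finset.sum_add_distrib, Finset.sum_add_distrib]
  -- helper: reindex powers
  have hpow : ∀ (j m : ℕ), (ω ^ j) ^ m = (ω ^ m) ^ j := by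
    intro j m
    rw [← pow_mul, mul_comm, pow_mul]
  -- first sum
  have hA : ∑ j ∈ Finset.range n, -((ω ^ j) ^ a * (1 - z ^ n))
      = -((if n ∣ a then (n : ℂ) else 0) * (1 - z ^ n)) := by
    have e : ∀ j ∈ Finset.range n, -((ω ^ j) ^ a * (1 - z ^ n))
        = (ω ^ a) ^ j * -(1 - z ^ n) := by
      intro j _
      rw [hpow]
      ring
    rw [Finset.sum_congr rfl e, ← Finset.sum_mul, root_sum n hn a]
    ring
  -- second sum
  have hB : ∑ j ∈ Finset.range n, (ω ^ j) ^ a * (∑ k ∈ Finset.range n, (ω ^ j * z) ^ k)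
      = (n : ℂ) * z ^ ((n - a) % n) := by
    have e1 : ∀ j ∈ Finset.range n,
        (ω ^ j) ^ a * (∑ k ∈ Finset.range n, (ω ^ j * z) ^ k)
        = ∑ k ∈ Finset.range n, (ω ^ (a + k)) ^ j * z ^ k := by
      intro j _
      rw [Finset.mul_sum]
      refine Finset.sum_congr rfl fun k _ => ?_
      rw [mul_pow, ← mul_assoc, ← pow_add, hpow]
    rw [Finset.sum_congr rfl e1, Finset.sum_comm]
    have e2 : ∀ k ∈ Finset.range n, ∑ j ∈ Finset.range n, (ω ^ (a + k)) ^ j * z ^ k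
        = (if n ∣ a + k then (n : ℂ) else 0) * z ^ k := by
      intro k _
      rw [← Finset.sum_mul, root_sum n hn]
    rw [Finset.sum_congr rfl e2, Finset.sum_eq_single ((n - a) % n)]
    · rw [if_pos]
      by_cases h0 : a = 0
      · subst h0; simp
      · rw [Nat.mod_eq_of_lt (by omega)]
        exact ⟨1, by omega⟩
    · intro k hk hne
      rw [if_neg, zero_mul]
      intro hdvd
      obtain ⟨c, hc⟩ := hdvd
      have hk' := Finset.mem_range.mp hk
      have hc2 : c < 2 := by
        by_contra hcon
        push_neg at hcon
        have : n * 2 ≤ n * c := Nat.mul_le_mul_left n hcon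
        omega
      by_cases h0 : a = 0
      · subst h0
        simp only [Nat.sub_zero, Nat.mod_self] at hne
        interval_cases c <;> omega
      · rw [Nat.mod_eq_of_lt (by omega)] at hne
        interval_cases c <;> omega
    · intro habs
      exact absurd (Finset.mem_range.mpr (Nat.mod_lt _ (by omega))) habs
  -- third sum
  have hC : ∑ j ∈ Finset.range n, (ω ^ j) ^ a * (∑ k ∈ Finset.range n, ((ω ^ j)⁻¹ * z) ^ k)
      = (n : ℂ) * z ^ a := by
    have e1 : ∀ j ∈ Finset.range n,
        (ω ^ j) ^ a * (∑ k ∈ Finset.range n, ((ω ^ j)⁻¹ * z) ^ k)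
        = ∑ k ∈ Finset.range n, (ω ^ (a + (n - 1) * k)) ^ j * z ^ k := by
      intro j _
      rw [hinv j, Finset.mul_sum]
      refine Finset.sum_congr rfl fun k _ => ?_
      rw [mul_pow, ← mul_assoc, ← pow_mul (ω ^ j) (n - 1) k,
        ← pow_add (ω ^ j) a ((n - 1) * k), hpow]
    rw [Finset.sum_congr rfl e1, Finset.sum_comm]
    have e2 : ∀ k ∈ Finset.range n,
        ∑ j ∈ Finset.range n, (ω ^ (a + (n - 1) * k)) ^ j * z ^ k
        = (if n ∣ a + (n - 1) * k then (n : ℂ) else 0) * z ^ k := by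
      intro k _
      rw [← Finset.sum_mul, root_sum n hn]
    rw [Finset.sum_congr rfl e2, Finset.sum_eq_single a]
    · rw [if_pos]
      refine ⟨a, ?_⟩
      cases n with
      | zero => omega
      | succ m => simp only [Nat.succ_sub_one]; ring
    · intro k hk hne
      rw [if_neg, zero_mul]
      intro hdvd
      obtain ⟨c, hc⟩ := hdvd
      have hk' := Finset.mem_range.mp hk
      have hcz : (a : ℤ) + ((n : ℤ) - 1) * k = (n : ℤ) * c := by
        have := congrArg (Nat.cast : ℕ → ℤ) hc
        push_cast [Nat.cast_sub hn] at this
        linarith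
      have hdz : (n : ℤ) ∣ (a : ℤ) - k := ⟨(c : ℤ) - k, by linear_combination hcz⟩
      have h0 : (a : ℤ) - k = 0 := by
        refine Int.eq_zero_of_abs_lt_dvd hdz ?_
        rw [abs_lt]
        constructor <;> [push_cast; push_cast] <;> omega
      have : a = k := by omega
      exact hne this.symm
    · intro habs
      exact absurd (Finset.mem_range.mpr ha) habs
  rw [hA, hB, hC]
  by_cases h0 : a = 0
  · subst h0
    simp only [Nat.sub_zero, Nat.mod_self, pow_zero, if_pos (dvd_zero n)]
    ring
  · have hnd : ¬ n ∣ a := fun hd => absurd (Nat.le_of_dvd (by omega) hd) (by omega)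
    rw [if_neg hnd, Nat.mod_eq_of_lt (by omega)]
    ring
end

section
/- Let n ≥ 3, let ω = e^{2πi/n}, and let 1 ≤ k ≤ n/2 with n odd. Then 1 + q^n + (q·P(q)/(2n)) · ∑_{ζ^n=1} [2(ζ^k + ζ^{−k}) − (ζ^{k+1} + ζ^{−(k+1)}) − (ζ^{k−1} + ζ^{−(k−1)})] / ((1−ζq)(1−ζ⁻¹q)) = (1−q^k)(1−q^{n−k}), where P(q) = (1+q)(1+q+···+q^{n−1}), as an identity of rational functions in q. -/
open Finset

lemma omega_pow (n : ℕ) (hn : n ≠ 0) : (omega n) ^ n = 1 :=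
  (Complex.isPrimitiveRoot_exp n hn).pow_eq_one

lemma rootsum (n : ℕ) (hn : n ≠ 0) (m : ℕ) :
    ∑ j ∈ range n, omega n ^ (j * m) = if n ∣ m then (n : ℂ) else 0 := by
  have h : IsPrimitiveRoot (omega n) n := Complex.isPrimitiveRoot_exp n hn
  by_cases hd : n ∣ m
  · simp only [hd, if_true]
    rw [Finset.sum_congr rfl (fun j _ => by
      rw [mul_comm, pow_mul, (h.pow_eq_one_iff_dvd m).2 hd, one_pow])]
    simp
  · simp only [hd, if_false]
    have h1 : (omega n) ^ m ≠ 1 := fun c => hd ((h.pow_eq_one_iff_dvd m).1 c)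
    have h2 := geom_sum_mul ((omega n)^m) n
    rw [← pow_mul, mul_comm m n, pow_mul, omega_pow n hn, one_pow, sub_self] at h2
    have h3 : ∑ i ∈ range n, ((omega n)^m) ^ i = 0 := by
      rcases mul_eq_zero.1 h2 with h | h
      · exact h
      · exact absurd (sub_eq_zero.1 h) h1
    rw [← h3]
    exact Finset.sum_congr rfl (fun j _ => by rw [mul_comm, pow_mul])

lemma modlem (n a i m : ℕ) (hn : n ≠ 0) (hm : m < n) :
    (n ∣ a + i + m * (n - 1)) ↔ m = (a + i) % n := by
  haveI : NeZero n := ⟨hn⟩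
  have h1 : (n ∣ a + i + m * (n - 1)) ↔ ((a + i + m * (n-1) : ℕ) : ZMod n) = 0 := by
    rw [ZMod.natCast_eq_zero_iff]
  rw [h1]
  have hcast : ((n - 1 : ℕ) : ZMod n) = -1 := by
    rw [Nat.cast_sub (Nat.one_le_iff_ne_zero.2 hn)]
    simp
  push_cast [hcast]
  constructor
  · intro h
    have : ((m : ℕ) : ZMod n) = ((a + i : ℕ) : ZMod n) := by push_cast; linear_combination -h
    rw [ZMod.natCast_eq_natCast_iff] at this
    have := this.symm
    unfold Nat.ModEq at this
    rw [Nat.mod_eq_of_lt hm] at this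
    exact this.symm
  · intro h
    have : ((m : ℕ) : ZMod n) = ((a + i : ℕ) : ZMod n) := by
      rw [ZMod.natCast_eq_natCast_iff]
      unfold Nat.ModEq
      rw [Nat.mod_eq_of_lt hm, h]
    push_cast at this
    linear_combination -this

lemma term_eq (n : ℕ) (hn : n ≠ 0) (q : ℂ) (hq : q ^ n ≠ 1) (j a : ℕ) :
    (omega n ^ j) ^ a / ((1 - omega n ^ j * q) * (1 - (omega n ^ j)⁻¹ * q)) =
    (∑ i ∈ range n, ∑ m ∈ range n, omega n ^ (j * (a + i + m * (n - 1))) * q ^ (i + m))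
      / (1 - q ^ n) ^ 2 := by
  set ζ := omega n ^ j with hζ
  have hζn : ζ ^ n = 1 := by
    rw [hζ, ← pow_mul, mul_comm, pow_mul, omega_pow n hn, one_pow]
  have hζ0 : ζ ≠ 0 := by
    intro h; rw [h, zero_pow hn] at hζn; exact zero_ne_one hζn
  have hinvn : (ζ⁻¹) ^ n = 1 := by rw [inv_pow, hζn, inv_one]
  have hinv : ζ⁻¹ = ζ ^ (n - 1) := by
    symm
    apply eq_inv_of_mul_eq_one_left
    rw [← pow_succ, Nat.sub_add_cancel (Nat.one_le_iff_ne_zero.2 hn), hζn]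
  have hd1 : (1 : ℂ) - ζ * q ≠ 0 := by
    intro h
    apply hq
    have h1 : ζ * q = 1 := by linear_combination -h
    calc q ^ n = ζ ^ n * q ^ n := by rw [hζn, one_mul]
    _ = (ζ * q) ^ n := (mul_pow ζ q n).symm
    _ = 1 := by rw [h1, one_pow]
  have hd2 : (1 : ℂ) - ζ⁻¹ * q ≠ 0 := by
    intro h
    apply hq
    have h1 : ζ⁻¹ * q = 1 := by linear_combination -h
    calc q ^ n = (ζ⁻¹) ^ n * q ^ n := by rw [hinvn, one_mul]
    _ = (ζ⁻¹ * q) ^ n := (mul_pow _ q n).symm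
    _ = 1 := by rw [h1, one_pow]
  have hg1 : (∑ i ∈ range n, (ζ * q) ^ i) * (1 - ζ * q) = 1 - q ^ n := by
    have h2 := geom_sum_mul (ζ * q) n
    have h3 : (ζ * q) ^ n = q ^ n := by rw [mul_pow, hζn, one_mul]
    linear_combination -h2 + h3 - 2*q^n*hζn
  have hg2 : (∑ i ∈ range n, (ζ⁻¹ * q) ^ i) * (1 - ζ⁻¹ * q) = 1 - q ^ n := by
    have h2 := geom_sum_mul (ζ⁻¹ * q) n
    have h3 : (ζ⁻¹ * q) ^ n = q ^ n := by rw [mul_pow, hinvn, one_mul]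
    linear_combination -h2 + h3 - 2*q^n*hinvn
  have hqn : (1 : ℂ) - q ^ n ≠ 0 := fun h => hq (by linear_combination -h)
  have hnum : (∑ i ∈ range n, ∑ m ∈ range n, omega n ^ (j * (a + i + m * (n - 1))) * q ^ (i + m))
      = ζ ^ a * ((∑ i ∈ range n, (ζ * q) ^ i) * (∑ i ∈ range n, (ζ⁻¹ * q) ^ i)) := by
    rw [Finset.sum_mul_sum, Finset.mul_sum]
    apply Finset.sum_congr rfl
    intro i _
    rw [Finset.mul_sum]
    apply Finset.sum_congr rfl
    intro m _
    rw [hinv, hζ, ← pow_mul]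
    ring
  rw [hnum]
  rw [div_eq_div_iff (mul_ne_zero hd1 hd2) (pow_ne_zero 2 hqn)]
  linear_combination (-(ζ^a) * (∑ i ∈ range n, (ζ⁻¹ * q) ^ i) * (1 - ζ⁻¹ * q)) * hg1 +
    (-(ζ^a) * (1 - q^n)) * hg2

lemma sumB (n : ℕ) (hn : n ≠ 0) (q : ℂ) (hq : q ^ n ≠ 1) (a : ℕ) (ha : a ≤ n) :
    ∑ j ∈ range n, (omega n ^ j) ^ a / ((1 - omega n ^ j * q) * (1 - (omega n ^ j)⁻¹ * q))
    = n * (∑ i ∈ range (n - a), q ^ (2*i+a) + ∑ i ∈ range a, q ^ (2*i+(n-a)))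
        / (1 - q ^ n) ^ 2 := by
  rw [Finset.sum_congr rfl (fun j _ => term_eq n hn q hq j a), ← Finset.sum_div]
  congr 1
  rw [Finset.sum_comm]
  have step1 : ∀ i ∈ range n,
      (∑ j ∈ range n, ∑ m ∈ range n, omega n ^ (j * (a + i + m * (n - 1))) * q ^ (i + m))
      = (n : ℂ) * q ^ (i + (a + i) % n) := by
    intro i _
    rw [Finset.sum_comm]
    have : ∀ m ∈ range n,
        (∑ j ∈ range n, omega n ^ (j * (a + i + m * (n - 1))) * q ^ (i + m))
        = if m = (a + i) % n then (n : ℂ) * q ^ (i + m) else 0 := by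
      intro m hm
      rw [← Finset.sum_mul, rootsum n hn]
      simp only [modlem n a i m hn (Finset.mem_range.1 hm)]
      split_ifs <;> simp
    rw [Finset.sum_congr rfl this, Finset.sum_ite_eq' (range n) ((a+i) % n)
      (fun m => (n : ℂ) * q ^ (i + m))]
    rw [if_pos (Finset.mem_range.2 (Nat.mod_lt _ (Nat.pos_of_ne_zero hn)))]
  rw [Finset.sum_congr rfl step1, ← Finset.mul_sum]
  congr 1
  have hsum := Finset.sum_range_add (fun i => q ^ (i + (a + i) % n)) (n - a) a
  rw [Nat.sub_add_cancel ha] at hsum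
  rw [hsum]
  congr 1
  · apply Finset.sum_congr rfl
    intro i hi
    have hi' : i < n - a := Finset.mem_range.1 hi
    have h1 : (a + i) % n = a + i := Nat.mod_eq_of_lt (by omega)
    rw [h1]
    congr 1
    omega
  · apply Finset.sum_congr rfl
    intro t ht
    have ht' : t < a := Finset.mem_range.1 ht
    have h1 : (a + (n - a + t)) % n = t := by
      have h2 : a + (n - a + t) = n + t := by omega
      rw [h2, Nat.add_mod_left, Nat.mod_eq_of_lt (by omega)]
    rw [h1]
    congr 1
    omega

lemma inv_pow_eq (n : ℕ) (hn : n ≠ 0) (j b : ℕ) (hb : b ≤ n) :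
    ((omega n ^ j)⁻¹) ^ b = (omega n ^ j) ^ (n - b) := by
  have hζn : (omega n ^ j) ^ n = 1 := by
    rw [← pow_mul, mul_comm, pow_mul, omega_pow n hn, one_pow]
  rw [inv_pow]
  symm
  apply eq_inv_of_mul_eq_one_left
  rw [← pow_add, Nat.sub_add_cancel hb, hζn]

set_option maxHeartbeats 2000000 in
/-- The dihedral computation (Case 1, `n` odd): for `1 ≤ k ≤ n/2`,
`1 + q^n + (q P(q)/(2n)) ∑_{ζ^n=1} [2(ζ^k+ζ^{-k}) - (ζ^{k+1}+ζ^{-(k+1)}) - (ζ^{k-1}+ζ^{-(k-1)})]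
   / ((1-ζq)(1-ζ⁻¹q)) = (1-q^k)(1-q^{n-k})`,
where `P(q) = (1+q)(1+q+⋯+q^{n-1})`, for every complex `q` avoiding the poles. -/
theorem stmt9 (n k : ℕ) (hn : 3 ≤ n) (hodd : Odd n) (hk : 1 ≤ k) (hk2 : 2 * k ≤ n)
    (q : ℂ) (hq : q ^ n ≠ 1) :
    1 + q ^ n +
        (q * ((1 + q) * ∑ i ∈ Finset.range n, q ^ i) / (2 * n)) *
          ∑ j ∈ Finset.range n,
            (2 * ((omega n ^ j) ^ k + ((omega n ^ j)⁻¹) ^ k) -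
                ((omega n ^ j) ^ (k + 1) + ((omega n ^ j)⁻¹) ^ (k + 1)) -
                ((omega n ^ j) ^ (k - 1) + ((omega n ^ j)⁻¹) ^ (k - 1))) /
              ((1 - omega n ^ j * q) * (1 - (omega n ^ j)⁻¹ * q))
      = (1 - q ^ k) * (1 - q ^ (n - k)) := by
  have hn0 : n ≠ 0 := by omega
  have hk1n : k + 1 ≤ n := by omega
  have hkn : k ≤ n := by omega
  have hkm1n : k - 1 ≤ n := by omega
  by_cases hqm : q = -1
  · subst hqm
    have h1 : (1 : ℂ) + (-1) = 0 := by norm_num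
    rw [h1, zero_mul, mul_zero, zero_div, zero_mul, add_zero]
    have h2 : ((-1 : ℂ)) ^ n = -1 := Odd.neg_one_pow hodd
    rw [h2]
    rcases Nat.even_or_odd k with he | ho
    · have h3 : ((-1 : ℂ)) ^ k = 1 := Even.neg_one_pow he
      rw [h3]; ring
    · have h4 : Even (n - k) := Nat.Odd.sub_odd hodd ho
      have h5 : ((-1 : ℂ)) ^ (n - k) = 1 := Even.neg_one_pow h4
      rw [h5]; ring
  · -- main case : q ≠ -1, q ≠ 1
    have hq1 : q ≠ 1 := fun h => hq (by rw [h, one_pow])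
    have hq2 : q ^ 2 ≠ 1 := by
      intro h
      have h2 : (q - 1) * (q + 1) = 0 := by linear_combination h
      rcases mul_eq_zero.1 h2 with h3 | h3
      · exact hq1 (by linear_combination h3)
      · exact hqm (by linear_combination h3)
    have per : ∀ j ∈ range n,
        (2 * ((omega n ^ j) ^ k + ((omega n ^ j)⁻¹) ^ k) -
            ((omega n ^ j) ^ (k + 1) + ((omega n ^ j)⁻¹) ^ (k + 1)) -
            ((omega n ^ j) ^ (k - 1) + ((omega n ^ j)⁻¹) ^ (k - 1))) /
          ((1 - omega n ^ j * q) * (1 - (omega n ^ j)⁻¹ * q))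
        = 2 * ((omega n ^ j) ^ k / ((1 - omega n ^ j * q) * (1 - (omega n ^ j)⁻¹ * q)))
          + 2 * ((omega n ^ j) ^ (n - k) / ((1 - omega n ^ j * q) * (1 - (omega n ^ j)⁻¹ * q)))
          - (omega n ^ j) ^ (k + 1) / ((1 - omega n ^ j * q) * (1 - (omega n ^ j)⁻¹ * q))
          - (omega n ^ j) ^ (n - (k + 1)) / ((1 - omega n ^ j * q) * (1 - (omega n ^ j)⁻¹ * q))
          - (omega n ^ j) ^ (k - 1) / ((1 - omega n ^ j * q) * (1 - (omega n ^ j)⁻¹ * q))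
          - (omega n ^ j) ^ (n - (k - 1)) / ((1 - omega n ^ j * q) * (1 - (omega n ^ j)⁻¹ * q)) := by
      intro j _
      rw [inv_pow_eq n hn0 j k hkn, inv_pow_eq n hn0 j (k+1) hk1n, inv_pow_eq n hn0 j (k-1) hkm1n]
      ring
    rw [Finset.sum_congr rfl per]
    simp only [Finset.sum_sub_distrib, Finset.sum_add_distrib, ← Finset.mul_sum]
    rw [sumB n hn0 q hq k hkn, sumB n hn0 q hq (n - k) (Nat.sub_le n k),
        sumB n hn0 q hq (k + 1) hk1n, sumB n hn0 q hq (n - (k + 1)) (Nat.sub_le _ _),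
        sumB n hn0 q hq (k - 1) hkm1n, sumB n hn0 q hq (n - (k - 1)) (Nat.sub_le _ _)]
    obtain ⟨s, rfl⟩ : ∃ s, k = s + 1 := ⟨k - 1, by omega⟩
    obtain ⟨r, rfl⟩ : ∃ r, n = (s + 1) + r + 1 := ⟨n - (s + 1) - 1, by omega⟩
    simp only [show s+1-1 = s from by omega,
      show s+1+r+1-(s+1) = r+1 from by omega,
      show s+1+r+1-(s+1+1) = r from by omega,
      show s+1+r+1-s = r+2 from by omega,
      show s+1+r+1-(r+1) = s+1 from by omega,
      show s+1+r+1-r = s+2 from by omega,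
      show s+1+r+1-(r+2) = s from by omega]
    have geo : ∀ (M c : ℕ), ∑ i ∈ range M, q ^ (2*i+c) = q ^ c * ((q^2)^M - 1) / (q^2 - 1) := by
      intro M c
      have h1 : ∀ i ∈ range M, q ^ (2*i+c) = (q^2)^i * q^c := by
        intro i _
        rw [pow_add, pow_mul]
      rw [Finset.sum_congr rfl h1, ← Finset.sum_mul, geom_sum_eq hq2]
      ring
    have hqn' : (1 : ℂ) - q ^ (s+1+r+1) ≠ 0 := fun h => hq (by linear_combination -h)
    have hq2' : q^2 - 1 ≠ 0 := sub_ne_zero.2 hq2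
    have hq1' : q - 1 ≠ 0 := sub_ne_zero.2 hq1
    have hnC : ((s+1+r+1 : ℕ) : ℂ) ≠ 0 := Nat.cast_ne_zero.2 (by omega)
    have collapse : ∀ (c N P F1 F2 F3 F4 F5 F6 : ℂ), N ≠ 0 →
        c / (2*N) * (2*(N*F1/P) + 2*(N*F2/P) - N*F3/P - N*F4/P - N*F5/P - N*F6/P)
        = c * (2*F1 + 2*F2 - F3 - F4 - F5 - F6) / (2*P) := by
      intro c N P F1 F2 F3 F4 F5 F6 hN
      rcases eq_or_ne P (0:ℂ) with h | h
      · subst h; simp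
      · field_simp
    rw [collapse _ _ _ _ _ _ _ _ _ hnC]
    simp only [geo]
    rw [geom_sum_eq hq1]
    have hP : ((1:ℂ) - q ^ (s+1+r+1))^2 ≠ 0 := pow_ne_zero 2 hqn'
    field_simp
    ring
end

section
/- Let ℓ, k be integers with 1 ≤ k ≤ ℓ−1. Then the rational function q^{k²}·((1+q^ℓ)(1+q^k)/(2(1+q^{ℓ−k})))·∏_{j=1}^{k}(1−q^{2(ℓ−j)})/(1−q^{2j}) plus q^{k²}·((1+q^ℓ)(1+q^{ℓ−k})/(2(1+q^k)))·∏_{j=1}^{k−1}(1−q^{2(ℓ−j)})/(1−q^{2j}) equals q^{k²}·∏_{j=1}^{k}(1−q^{2(ℓ−j+1)})/(1−q^{2j}), i.e. equals q^{k²}·C(ℓ,k)_{q²}. -/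
open Finset

private lemma one_add_X_pow_ne (n : ℕ) :
    (1 + (RatFunc.X : RatFunc ℚ) ^ n) ≠ 0 := by
  rw [← RatFunc.algebraMap_X, ← map_pow, ← map_one (algebraMap (Polynomial ℚ) (RatFunc ℚ)),
    ← map_add]
  refine RatFunc.algebraMap_ne_zero ?_
  intro h
  have := congrArg (Polynomial.eval 2) h
  simp at this
  nlinarith [pow_pos (by norm_num : (0:ℚ) < 2) n]

private lemma one_sub_X_pow_ne (n : ℕ) (hn : 1 ≤ n) :
    (1 - (RatFunc.X : RatFunc ℚ) ^ n) ≠ 0 := by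
  rw [← RatFunc.algebraMap_X, ← map_pow, ← map_one (algebraMap (Polynomial ℚ) (RatFunc ℚ)),
    ← map_sub]
  refine RatFunc.algebraMap_ne_zero ?_
  intro h
  have := congrArg (Polynomial.eval 0) h
  simp [zero_pow (by omega : n ≠ 0)] at this

/-- Type B computation: for `1 ≤ k ≤ ℓ-1`, the sum of the two generic degrees
`q^{k²} (1+q^ℓ)(1+q^k)/(2(1+q^{ℓ-k})) ∏_{j=1}^{k} (1-q^{2(ℓ-j)})/(1-q^{2j})` and
`q^{k²} (1+q^ℓ)(1+q^{ℓ-k})/(2(1+q^k)) ∏_{j=1}^{k-1} (1-q^{2(ℓ-j)})/(1-q^{2j})`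
equals `q^{k²} ∏_{j=1}^{k} (1-q^{2(ℓ-j+1)})/(1-q^{2j}) = q^{k²} C(ℓ,k)_{q²}`. -/
theorem stmt12 (ℓ k : ℕ) (hk : 1 ≤ k) (hkl : k < ℓ) :
    (RatFunc.X : RatFunc ℚ) ^ (k ^ 2) *
          ((1 + (RatFunc.X : RatFunc ℚ) ^ ℓ) * (1 + (RatFunc.X : RatFunc ℚ) ^ k) /
            (2 * (1 + (RatFunc.X : RatFunc ℚ) ^ (ℓ - k)))) *
          ∏ j ∈ Finset.Icc 1 k,
            (1 - (RatFunc.X : RatFunc ℚ) ^ (2 * (ℓ - j))) / (1 - (RatFunc.X : RatFunc ℚ) ^ (2 * j)) +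
        (RatFunc.X : RatFunc ℚ) ^ (k ^ 2) *
          ((1 + (RatFunc.X : RatFunc ℚ) ^ ℓ) * (1 + (RatFunc.X : RatFunc ℚ) ^ (ℓ - k)) /
            (2 * (1 + (RatFunc.X : RatFunc ℚ) ^ k))) *
          ∏ j ∈ Finset.Icc 1 (k - 1),
            (1 - (RatFunc.X : RatFunc ℚ) ^ (2 * (ℓ - j))) / (1 - (RatFunc.X : RatFunc ℚ) ^ (2 * j))
      = (RatFunc.X : RatFunc ℚ) ^ (k ^ 2) *
          ∏ j ∈ Finset.Icc 1 k,
            (1 - (RatFunc.X : RatFunc ℚ) ^ (2 * (ℓ - j + 1))) /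
              (1 - (RatFunc.X : RatFunc ℚ) ^ (2 * j)) := by
  set X : RatFunc ℚ := RatFunc.X with hXdef
  obtain ⟨m, rfl⟩ : ∃ m, k = m + 1 := ⟨k - 1, by omega⟩
  set k := m + 1 with hkdef
  have hksimp : k - 1 = m := by omega
  set Pm : RatFunc ℚ := ∏ j ∈ Finset.Icc 1 m, (1 - X ^ (2 * (ℓ - j))) / (1 - X ^ (2 * j))
    with hPm
  -- first product
  have hP1 : (∏ j ∈ Finset.Icc 1 k, (1 - X ^ (2 * (ℓ - j))) / (1 - X ^ (2 * j)))
      = Pm * ((1 - X ^ (2 * (ℓ - k))) / (1 - X ^ (2 * k))) :=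
    Finset.prod_Icc_succ_top (by omega) _
  -- target product
  have hT : (∏ j ∈ Finset.Icc 1 k, (1 - X ^ (2 * (ℓ - j + 1))) / (1 - X ^ (2 * j)))
      = Pm * ((1 - X ^ (2 * ℓ)) / (1 - X ^ (2 * k))) := by
    rw [Finset.prod_div_distrib, hPm, Finset.prod_div_distrib]
    have hnum : (∏ j ∈ Finset.Icc 1 k, (1 - X ^ (2 * (ℓ - j + 1))))
        = (1 - X ^ (2 * ℓ)) * ∏ j ∈ Finset.Icc 1 m, (1 - X ^ (2 * (ℓ - j))) := by
      have hmap : Finset.Icc 1 k = Finset.map (addRightEmbedding 1) (Finset.Icc 0 m) := by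
        rw [Finset.map_add_right_Icc]
      rw [hmap, Finset.prod_map]
      have : ∀ j ∈ Finset.Icc 0 m, (1 - X ^ (2 * (ℓ - (addRightEmbedding 1) j + 1)))
          = (1 - X ^ (2 * (ℓ - j))) := by
        intro j hj
        simp only [Finset.mem_Icc] at hj
        simp only [addRightEmbedding_apply]
        congr 2
        omega
      rw [Finset.prod_congr rfl this,
        show Finset.Icc 0 m = insert 0 (Finset.Icc 1 m) by ext x; simp; omega,
        Finset.prod_insert (by simp)]
      simp
    have hden : (∏ j ∈ Finset.Icc 1 k, (1 - X ^ (2 * j)))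
        = (∏ j ∈ Finset.Icc 1 m, (1 - X ^ (2 * j))) * (1 - X ^ (2 * k)) :=
      Finset.prod_Icc_succ_top (by omega) _
    rw [hnum, hden]
    have h1 : (∏ j ∈ Finset.Icc 1 m, (1 - X ^ (2 * j))) ≠ 0 :=
      Finset.prod_ne_zero_iff.2 fun j hj =>
        one_sub_X_pow_ne _ (by simp at hj; omega)
    have h2 : (1 - X ^ (2 * k)) ≠ 0 := one_sub_X_pow_ne _ (by omega)
    field_simp
  rw [hksimp, hP1, hT, ← hPm]
  -- key rational identity
  have ea : X ^ (2 * k) = (X ^ k) ^ 2 := by rw [← pow_mul]; ring_nf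
  have eb : X ^ (2 * (ℓ - k)) = (X ^ (ℓ - k)) ^ 2 := by rw [← pow_mul]; ring_nf
  have el : X ^ ℓ = X ^ k * X ^ (ℓ - k) := by rw [← pow_add]; congr 1; omega
  have e2l : X ^ (2 * ℓ) = (X ^ k) ^ 2 * (X ^ (ℓ - k)) ^ 2 := by
    rw [← pow_mul, ← pow_mul, ← pow_add]; congr 1; omega
  have key : (1 + X ^ ℓ) * (1 + X ^ k) / (2 * (1 + X ^ (ℓ - k)))
        * ((1 - X ^ (2 * (ℓ - k))) / (1 - X ^ (2 * k)))
      + (1 + X ^ ℓ) * (1 + X ^ (ℓ - k)) / (2 * (1 + X ^ k))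
      = (1 - X ^ (2 * ℓ)) / (1 - X ^ (2 * k)) := by
    have ha : (1 + X ^ k) ≠ 0 := one_add_X_pow_ne _
    have hb : (1 + X ^ (ℓ - k)) ≠ 0 := one_add_X_pow_ne _
    have h2 : (1 - X ^ (2 * k)) ≠ 0 := one_sub_X_pow_ne _ (by omega)
    rw [ea, eb, el, e2l]
    rw [ea] at h2
    generalize X ^ k = a at *
    generalize X ^ (ℓ - k) = b at *
    have h2' : (2 : RatFunc ℚ) ≠ 0 := by
      have h := RatFunc.algebraMap_ne_zero (K := ℚ) (x := 2) (by norm_num)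
      rw [map_ofNat] at h
      exact h
    rw [div_mul_div_comm, div_add_div _ _ (by exact mul_ne_zero (mul_ne_zero h2' hb) h2)
      (mul_ne_zero h2' ha), div_eq_div_iff (by
        exact mul_ne_zero (mul_ne_zero (mul_ne_zero h2' hb) h2) (mul_ne_zero h2' ha)) h2]
    ring
  linear_combination (X ^ (k ^ 2) * Pm) * key
end
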